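/- arXiv:2302.04484 — 4 statements merged into one kernel-verified Lean document; each statement's English description precedes it below -/
import Mathlib

section
/- Let G be a group. Suppose there is a function c assigning to every group a real number such that c(H₁) = c(H₂) whenever the groups H₁ and H₂ are isomorphic, and suppose there exist real numbers 0 < α ≤ β such that α·[G:H] ≤ c(H) ≤ β·[G:H] for every finite-index subgroup H ≤ G. Then any two isomorphic finite-index subgroups of G have the same index: if H₁, H₂ ≤ G have finite index in G and H₁ ≅ H₂, then [G:H₁] = [G:H₂]. -/
/-!
View an isomorphism `H₁ ≃* H₂` as an injective homomorphism `f : H₁ →* G` with range `H₂`, and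
write `n₁ = [G : H₁]`, `n₂ = [G : H₂]`. For `K ≤ H₁` the image `f K` is isomorphic to `K` and has index
`[G : K] · n₂ / n₁`. Iterating the partial map `f` `k` times on its domain of definition (which has finite
index) yields isomorphic finite-index subgroups `S ≅ K` with `[G : S] · n₁ᵏ = [G : K] · n₂ᵏ`. Since `c`
takes the same value on `S` and `K`, the bounds give `α · n₂ᵏ ≤ β · n₁ᵏ` for every `k`, so `n₂ ≤ n₁`;
by symmetry the indices are equal.
-/

universe u

namespace Subgroup

variable {G : Type*} [Group G] {H : Subgroup G} (f : H →* G)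

/- `f : H →* G` is treated as a partial map `G ⇀ G` with domain `H`; `partialMap f` and
`partialComap f` are its image and preimage operations on subgroups of `G`. -/
def partialMap (K : Subgroup G) : Subgroup G := (K.subgroupOf H).map f

def partialComap (K : Subgroup G) : Subgroup G := (K.comap f).map H.subtype

lemma partialComap_le (K : Subgroup G) : partialComap f K ≤ H := map_subtype_le _

lemma partialMap_partialComap_le (K : Subgroup G) : partialMap f (partialComap f K) ≤ K := by
  rw [partialMap, partialComap, subgroupOf, comap_map_eq_self_of_injective H.subtype_injective]
  exact map_comap_le _ _

lemma partialMap_mono {K L : Subgroup G} (h : K ≤ L) : partialMap f K ≤ partialMap f L :=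
  map_mono (comap_mono h)

instance finiteIndex_partialComap (K : Subgroup G) [H.FiniteIndex] [K.FiniteIndex] :
    (partialComap f K).FiniteIndex :=
  ⟨by
    rw [partialComap, index_map_subtype, index_comap]
    exact mul_ne_zero FiniteIndex.index_ne_zero FiniteIndex.index_ne_zero⟩

variable {f}

lemma index_partialMap_mul (hf : Function.Injective f) {K : Subgroup G} (hK : K ≤ H) :
    (partialMap f K).index * H.index = K.index * f.range.index := by
  rw [partialMap, index_map_of_injective _ hf, mul_right_comm, ← relIndex, relIndex_mul_index hK]

lemma finiteIndex_partialMap (hf : Function.Injective f) [f.range.FiniteIndex] {K : Subgroup G}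
    [K.FiniteIndex] (hK : K ≤ H) : (partialMap f K).FiniteIndex := by
  refine ⟨fun h0 => ?_⟩
  have h := index_partialMap_mul hf hK
  rw [h0, zero_mul] at h
  exact mul_ne_zero FiniteIndex.index_ne_zero FiniteIndex.index_ne_zero h.symm

noncomputable def partialMapEquiv (hf : Function.Injective f) {K : Subgroup G} (hK : K ≤ H) :
    K ≃* partialMap f K :=
  (subgroupOfEquivOfLe hK).symm.trans ((K.subgroupOf H).equivMapOfInjective f hf)

variable (f)

/-- The domain of the `k`-th iterate of the partial map `f`. -/
def iterateDomain : ℕ → Subgroup G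
  | 0 => H
  | k + 1 => partialComap f (iterateDomain k)

lemma iterateDomain_le : ∀ k, iterateDomain f k ≤ H
  | 0 => le_rfl
  | _ + 1 => partialComap_le f _

instance finiteIndex_iterateDomain [H.FiniteIndex] (k : ℕ) : (iterateDomain f k).FiniteIndex := by
  induction k with
  | zero => exact ‹H.FiniteIndex›
  | succ k ih => exact finiteIndex_partialComap f _

variable {f}

/-- `S` is the image of `K` under the `k`-th iterate of `f`. -/
lemma exists_mulEquiv_index_mul_pow_eq (hf : Function.Injective f) [f.range.FiniteIndex]
    (k : ℕ) : ∀ K ≤ iterateDomain f k, K.FiniteIndex →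
      ∃ S : Subgroup G, S.FiniteIndex ∧ Nonempty (S ≃* K) ∧
        S.index * H.index ^ k = K.index * f.range.index ^ k := by
  induction k with
  | zero => exact fun K _ hK => ⟨K, hK, ⟨MulEquiv.refl _⟩, by simp⟩
  | succ k ih =>
    intro K hK _
    have hKH : K ≤ H := hK.trans (iterateDomain_le f _)
    have hfin := finiteIndex_partialMap hf hKH
    have hle : partialMap f K ≤ iterateDomain f k :=
      (partialMap_mono f hK).trans (partialMap_partialComap_le f _)
    obtain ⟨S, hS, ⟨e⟩, hSidx⟩ := ih _ hle hfin
    refine ⟨S, hS, ⟨e.trans (partialMapEquiv hf hKH).symm⟩, ?_⟩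
    calc S.index * H.index ^ (k + 1)
        = S.index * H.index ^ k * H.index := by ring
      _ = (partialMap f K).index * H.index * f.range.index ^ k := by rw [hSidx]; ring
      _ = K.index * f.range.index ^ (k + 1) := by rw [index_partialMap_mul hf hKH]; ring

end Subgroup

lemma le_of_forall_mul_pow_le_mul_pow {a b α β : ℝ} (hα : 0 < α) (hb : 0 < b)
    (h : ∀ k : ℕ, α * a ^ k ≤ β * b ^ k) : a ≤ b := by
  by_contra! hba
  obtain ⟨k, hk⟩ := pow_unbounded_of_one_lt (β / α) ((one_lt_div hb).mpr hba)
  rw [div_pow, div_lt_div_iff₀ hα (pow_pos hb k)] at hk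
  linarith [h k]

section LinearComplexity

variable {G : Type u} [Group G]

lemma mul_index_le_mul_index_of_mulEquiv (c : (H : Type u) → [Group H] → ℝ)
    (hinv : ∀ (H₁ H₂ : Type u) [Group H₁] [Group H₂], Nonempty (H₁ ≃* H₂) → c H₁ = c H₂)
    {α β : ℝ} (hbound : ∀ H : Subgroup G, H.FiniteIndex →
      α * (H.index : ℝ) ≤ c H ∧ c H ≤ β * (H.index : ℝ))
    {S K : Subgroup G} [hS : S.FiniteIndex] [hK : K.FiniteIndex] (e : S ≃* K) :
    α * (S.index : ℝ) ≤ β * K.index :=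
  calc α * (S.index : ℝ) ≤ c S := (hbound S hS).1
    _ = c K := hinv _ _ ⟨e⟩
    _ ≤ β * K.index := (hbound K hK).2

lemma index_range_le_index (c : (H : Type u) → [Group H] → ℝ)
    (hinv : ∀ (H₁ H₂ : Type u) [Group H₁] [Group H₂], Nonempty (H₁ ≃* H₂) → c H₁ = c H₂)
    {α β : ℝ} (hα : 0 < α) (hbound : ∀ H : Subgroup G, H.FiniteIndex →
      α * (H.index : ℝ) ≤ c H ∧ c H ≤ β * (H.index : ℝ))
    {H : Subgroup G} [H.FiniteIndex] {f : H →* G} (hf : Function.Injective f)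
    [f.range.FiniteIndex] : f.range.index ≤ H.index := by
  have hH : (0 : ℝ) < H.index := mod_cast Nat.pos_of_ne_zero Subgroup.FiniteIndex.index_ne_zero
  refine Nat.cast_le.mp (le_of_forall_mul_pow_le_mul_pow (β := β) hα hH fun k => ?_)
  set T := Subgroup.iterateDomain f k
  obtain ⟨S, hS, ⟨e⟩, hidx⟩ :=
    Subgroup.exists_mulEquiv_index_mul_pow_eq hf k T le_rfl inferInstance
  have hT : (0 : ℝ) < T.index := mod_cast Nat.pos_of_ne_zero Subgroup.FiniteIndex.index_ne_zero
  have hidx' : (S.index : ℝ) * H.index ^ k = T.index * f.range.index ^ k := mod_cast hidx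
  have hST := mul_index_le_mul_index_of_mulEquiv c hinv hbound e
  refine le_of_mul_le_mul_left ?_ hT
  calc (T.index : ℝ) * (α * f.range.index ^ k) = α * S.index * H.index ^ k := by
        rw [mul_assoc α, hidx']; ring
    _ ≤ β * T.index * H.index ^ k := by gcongr
    _ = T.index * (β * H.index ^ k) := by ring

lemma index_le_index_of_mulEquiv (c : (H : Type u) → [Group H] → ℝ)
    (hinv : ∀ (H₁ H₂ : Type u) [Group H₁] [Group H₂], Nonempty (H₁ ≃* H₂) → c H₁ = c H₂)
    {α β : ℝ} (hα : 0 < α) (hbound : ∀ H : Subgroup G, H.FiniteIndex →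
      α * (H.index : ℝ) ≤ c H ∧ c H ≤ β * (H.index : ℝ))
    {H₁ H₂ : Subgroup G} [H₁.FiniteIndex] [hH₂ : H₂.FiniteIndex] (φ : H₁ ≃* H₂) :
    H₂.index ≤ H₁.index := by
  let f : H₁ →* G := H₂.subtype.comp φ.toMonoidHom
  have hrange : f.range = H₂ := by
    rw [MonoidHom.range_comp, MonoidHom.range_eq_top_of_surjective _ φ.surjective,
      ← MonoidHom.range_eq_map, H₂.range_subtype]
  have : f.range.FiniteIndex := hrange ▸ hH₂
  simpa only [hrange] using
    index_range_le_index c hinv hα hbound (f := f) (H₂.subtype_injective.comp φ.injective)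

end LinearComplexity

theorem index_eq_of_iso_of_linear_complexity_general {G : Type u} [Group G]
    (c : (H : Type u) → [inst : Group H] → ℝ)
    (hinv : ∀ (H₁ H₂ : Type u) [Group H₁] [Group H₂],
      Nonempty (H₁ ≃* H₂) → c H₁ = c H₂)
    (α β : ℝ) (hα : 0 < α)
    (hbound : ∀ H : Subgroup G, H.FiniteIndex →
      α * (H.index : ℝ) ≤ c H ∧ c H ≤ β * (H.index : ℝ))
    (H₁ H₂ : Subgroup G) (h₁ : H₁.FiniteIndex) (h₂ : H₂.FiniteIndex)
    (hiso : Nonempty (H₁ ≃* H₂)) :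
    H₁.index = H₂.index := by
  obtain ⟨φ⟩ := hiso
  exact le_antisymm (index_le_index_of_mulEquiv c hinv hα hbound φ.symm)
    (index_le_index_of_mulEquiv c hinv hα hbound φ)

/-- If `c` is an isomorphism-invariant real-valued function on groups which is
bounded above and below by positive multiples of the index on finite-index
subgroups of `G`, then isomorphic finite-index subgroups of `G` have the same
index. -/
theorem index_eq_of_iso_of_linear_complexity {G : Type u} [Group G]
    (c : (H : Type u) → [inst : Group H] → ℝ)
    (hinv : ∀ (H₁ H₂ : Type u) [Group H₁] [Group H₂],
      Nonempty (H₁ ≃* H₂) → c H₁ = c H₂)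
    (α β : ℝ) (hα : 0 < α) (hαβ : α ≤ β)
    (hbound : ∀ H : Subgroup G, H.FiniteIndex →
      α * (H.index : ℝ) ≤ c H ∧ c H ≤ β * (H.index : ℝ))
    (H₁ H₂ : Subgroup G) (h₁ : H₁.FiniteIndex) (h₂ : H₂.FiniteIndex)
    (hiso : Nonempty (H₁ ≃* H₂)) :
    H₁.index = H₂.index :=
  index_eq_of_iso_of_linear_complexity_general c hinv α β hα hbound H₁ H₂ h₁ h₂ hiso
end

section
/- Let G be a group and let c be a real-valued function on the set of subgroups of G. Suppose there exist real numbers 0 < α ≤ β such that α·[G:K] ≤ c(K) ≤ β·[G:K] for every finite-index subgroup K ≤ G. For a finite-index subgroup H ≤ G, define c̲(H) := sup over finite-index subgroups K₀ ≤ G with K₀ ≤ H of ( inf over finite-index subgroups K ≤ G with K ≤ K₀ of c(K)/[H:K] ). Then c̲ is multiplicative: for every finite-index subgroup H ≤ G one has c̲(H) = [G:H] · c̲(G), where c̲(G) is obtained from the same definition with H = G. -/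
/-!
Writing `m(K₀) = inf_{K ≤ K₀} c(K)/[G:K]` (`infNormalizedCost c K₀`), the identity
`[H:K] · [G:H] = [G:K]` turns the inner infimum in `c̲(H)` into `[G:H] · m(K₀)`, so
`c̲(H) = [G:H] · sup_{K₀ ≤ H} m(K₀)`. The lower bound on `c` keeps these infima bounded below, so
`m` is antitone, and replacing `K₀` by `K₀ ⊓ H` shows that restricting the supremum to `K₀ ≤ H`
changes nothing.
-/

open Pointwise

namespace Subgroup

variable {G : Type*} [Group G]

lemma div_relIndex_eq_index_mul_div_index {K H : Subgroup G} [H.FiniteIndex] (hKH : K ≤ H)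
    (x : ℝ) : x / K.relIndex H = H.index * (x / K.index) := by
  rw [← relIndex_mul_index hKH, Nat.cast_mul, div_mul_eq_div_div,
    mul_div_cancel₀ _ (Nat.cast_ne_zero.mpr FiniteIndex.index_ne_zero)]

noncomputable def infNormalizedCost (c : Subgroup G → ℝ) (K₀ : Subgroup G) : ℝ :=
  sInf {y : ℝ | ∃ K : Subgroup G, K.FiniteIndex ∧ K ≤ K₀ ∧ y = c K / K.index}

lemma sInf_div_relIndex_eq (c : Subgroup G → ℝ) {K₀ H : Subgroup G} [H.FiniteIndex]
    (hK₀H : K₀ ≤ H) :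
    sInf {y : ℝ | ∃ K : Subgroup G, K.FiniteIndex ∧ K ≤ K₀ ∧ y = c K / K.relIndex H} =
      H.index * infNormalizedCost c K₀ := by
  have hscale : {y : ℝ | ∃ K : Subgroup G, K.FiniteIndex ∧ K ≤ K₀ ∧ y = c K / K.relIndex H} =
      (H.index : ℝ) • {y : ℝ | ∃ K : Subgroup G, K.FiniteIndex ∧ K ≤ K₀ ∧ y = c K / K.index} := by
    ext y
    simp only [Set.mem_ofPred_eq, Set.mem_smul_set, smul_eq_mul]
    constructor
    · rintro ⟨K, hK, hKK₀, rfl⟩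
      exact ⟨_, ⟨K, hK, hKK₀, rfl⟩, (div_relIndex_eq_index_mul_div_index (hKK₀.trans hK₀H) _).symm⟩
    · rintro ⟨_, ⟨K, hK, hKK₀, rfl⟩, rfl⟩
      exact ⟨K, hK, hKK₀, (div_relIndex_eq_index_mul_div_index (hKK₀.trans hK₀H) _).symm⟩
  rw [hscale, Real.sInf_smul_of_nonneg (Nat.cast_nonneg _), smul_eq_mul, infNormalizedCost]

lemma infNormalizedCost_anti {c : Subgroup G → ℝ} {α : ℝ}
    (hc : ∀ K : Subgroup G, K.FiniteIndex → α * K.index ≤ c K) {K₀ K₁ : Subgroup G}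
    (hK₁ : K₁.FiniteIndex) (hK₁K₀ : K₁ ≤ K₀) :
    infNormalizedCost c K₀ ≤ infNormalizedCost c K₁ := by
  have hbdd : BddBelow {y : ℝ | ∃ K : Subgroup G, K.FiniteIndex ∧ K ≤ K₀ ∧ y = c K / K.index} := by
    refine ⟨α, ?_⟩
    rintro _ ⟨K, hK, -, rfl⟩
    exact (le_div_iff₀ (Nat.cast_pos.mpr (Nat.pos_of_ne_zero hK.index_ne_zero))).mpr (hc K hK)
  refine csInf_le_csInf hbdd ⟨_, K₁, hK₁, le_rfl, rfl⟩ ?_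
  rintro _ ⟨K, hK, hKK₁, rfl⟩
  exact ⟨K, hK, hKK₁.trans hK₁K₀, rfl⟩

lemma sSup_infNormalizedCost_eq_of_le {c : Subgroup G → ℝ} {α : ℝ}
    (hc : ∀ K : Subgroup G, K.FiniteIndex → α * K.index ≤ c K) {H H' : Subgroup G}
    [H.FiniteIndex] (hHH' : H ≤ H') :
    sSup {x : ℝ | ∃ K₀ : Subgroup G, K₀.FiniteIndex ∧ K₀ ≤ H ∧ x = infNormalizedCost c K₀} =
      sSup {x : ℝ | ∃ K₀ : Subgroup G, K₀.FiniteIndex ∧ K₀ ≤ H' ∧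
        x = infNormalizedCost c K₀} := by
  apply csSup_eq_csSup_of_forall_exists_le
  · rintro _ ⟨K₀, hK₀, hK₀H, rfl⟩
    exact ⟨_, ⟨K₀, hK₀, hK₀H.trans hHH', rfl⟩, le_rfl⟩
  · rintro _ ⟨K₀, hK₀, -, rfl⟩
    exact ⟨_, ⟨K₀ ⊓ H, inferInstance, inf_le_right, rfl⟩,
      infNormalizedCost_anti hc inferInstance inf_le_left⟩

lemma sSup_sInf_div_relIndex_eq (c : Subgroup G → ℝ) (H : Subgroup G) [H.FiniteIndex] :
    sSup {x : ℝ | ∃ K₀ : Subgroup G, K₀.FiniteIndex ∧ K₀ ≤ H ∧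
        x = sInf {y : ℝ | ∃ K : Subgroup G, K.FiniteIndex ∧ K ≤ K₀ ∧
          y = c K / (K.relIndex H : ℝ)}} =
      H.index * sSup {x : ℝ | ∃ K₀ : Subgroup G, K₀.FiniteIndex ∧ K₀ ≤ H ∧
        x = infNormalizedCost c K₀} := by
  have hscale : {x : ℝ | ∃ K₀ : Subgroup G, K₀.FiniteIndex ∧ K₀ ≤ H ∧
        x = sInf {y : ℝ | ∃ K : Subgroup G, K.FiniteIndex ∧ K ≤ K₀ ∧
          y = c K / (K.relIndex H : ℝ)}} =
      (H.index : ℝ) • {x : ℝ | ∃ K₀ : Subgroup G, K₀.FiniteIndex ∧ K₀ ≤ H ∧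
        x = infNormalizedCost c K₀} := by
    ext x
    simp only [Set.mem_ofPred_eq, Set.mem_smul_set, smul_eq_mul]
    constructor
    · rintro ⟨K₀, hK₀, hK₀H, rfl⟩
      exact ⟨_, ⟨K₀, hK₀, hK₀H, rfl⟩, (sInf_div_relIndex_eq c hK₀H).symm⟩
    · rintro ⟨_, ⟨K₀, hK₀, hK₀H, rfl⟩, rfl⟩
      exact ⟨K₀, hK₀, hK₀H, (sInf_div_relIndex_eq c hK₀H).symm⟩
  rw [hscale, Real.sSup_smul_of_nonneg (Nat.cast_nonneg _), smul_eq_mul]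

end Subgroup

theorem cbar_multiplicative_general {G : Type*} [Group G]
    (c : Subgroup G → ℝ) (α β : ℝ)
    (hbound : ∀ K : Subgroup G, K.FiniteIndex →
      α * (K.index : ℝ) ≤ c K ∧ c K ≤ β * (K.index : ℝ))
    (cbar : Subgroup G → ℝ)
    (hcbar : ∀ H : Subgroup G,
      cbar H = sSup {x : ℝ | ∃ K₀ : Subgroup G, K₀.FiniteIndex ∧ K₀ ≤ H ∧
        x = sInf {y : ℝ | ∃ K : Subgroup G, K.FiniteIndex ∧ K ≤ K₀ ∧
          y = c K / (K.relIndex H : ℝ)}}) :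
    ∀ H : Subgroup G, H.FiniteIndex → cbar H = (H.index : ℝ) * cbar ⊤ := by
  intro H hH
  rw [hcbar H, hcbar ⊤, Subgroup.sSup_sInf_div_relIndex_eq, Subgroup.sSup_sInf_div_relIndex_eq,
    Subgroup.index_top, Nat.cast_one, one_mul,
    Subgroup.sSup_infNormalizedCost_eq_of_le (fun K hK ↦ (hbound K hK).1) le_top]

/-- Suppose `c` is a real-valued function on subgroups of `G` with
`α·[G:K] ≤ c(K) ≤ β·[G:K]` for all finite-index `K` (where `0 < α ≤ β`).
Define `c̲(H) = sup_{K₀ ≤ H fin.idx} inf_{K ≤ K₀ fin.idx} c(K)/[H:K]`.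
Then `c̲` is multiplicative: `c̲(H) = [G:H]·c̲(G)` for every finite-index `H`. -/
theorem cbar_multiplicative {G : Type*} [Group G]
    (c : Subgroup G → ℝ) (α β : ℝ) (hα : 0 < α) (hαβ : α ≤ β)
    (hbound : ∀ K : Subgroup G, K.FiniteIndex →
      α * (K.index : ℝ) ≤ c K ∧ c K ≤ β * (K.index : ℝ))
    (cbar : Subgroup G → ℝ)
    (hcbar : ∀ H : Subgroup G,
      cbar H = sSup {x : ℝ | ∃ K₀ : Subgroup G, K₀.FiniteIndex ∧ K₀ ≤ H ∧
        x = sInf {y : ℝ | ∃ K : Subgroup G, K.FiniteIndex ∧ K ≤ K₀ ∧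
          y = c K / (K.relIndex H : ℝ)}}) :
    ∀ H : Subgroup G, H.FiniteIndex → cbar H = (H.index : ℝ) * cbar ⊤ :=
  cbar_multiplicative_general c α β hbound cbar hcbar
end

section
/- Let X be a connected simple graph with vertex set V and graph distance d, and let q assign to every ordered pair (x,y) of vertices a rational 1-chain q(x,y) on X such that: ∂q(x,y) = 𝟙_y − 𝟙_x for all x,y; there is a constant δ₁ ≥ 0 such that for every geodesic γ from x to y, every unoriented edge {u,v} with q(x,y)(u,v) ≠ 0 lies within distance δ₁ of some vertex of γ; there is a constant C ≥ 0 with ‖q(x,y)‖₁ ≤ C·d(x,y) for all x,y; and there is a constant D ≥ 0 with ‖q(x,y) + q(y,z) + q(z,x)‖₁ ≤ D for all x,y,z. Then for all x,y ∈ V, ‖q(x,y)‖_∞ ≤ 2C(δ₁ + 1) + 2D. -/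
open scoped Classical

/-- A rational 1-chain on a simple graph `X`: a finitely supported antisymmetric
function on ordered pairs of adjacent vertices. -/
structure OneChain {V : Type*} (X : SimpleGraph V) where
  val : V → V → ℚ
  antisymm : ∀ u v, val u v = - val v u
  adj_support : ∀ u v, ¬ X.Adj u v → val u v = 0
  finite_support : {p : V × V | val p.1 p.2 ≠ 0}.Finite

namespace OneChain

variable {V : Type*} {X : SimpleGraph V}

/-- The boundary of a 1-chain: `∂a(v) = Σ_{u adjacent to v} a(u,v)`. -/
noncomputable def boundary (a : OneChain X) (v : V) : ℚ :=
  ∑ᶠ u, a.val u v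

/-- The ℓ1-norm of a 1-chain, with one term per unoriented edge. -/
noncomputable def l1 (a : OneChain X) : ℚ :=
  (∑ᶠ p : V × V, |a.val p.1 p.2|) / 2

/-- Pointwise sum of two 1-chains. -/
def add (a b : OneChain X) : OneChain X where
  val u v := a.val u v + b.val u v
  antisymm u v := by (try simp only []); rw [a.antisymm u v, b.antisymm u v]; ring
  adj_support u v h := by (try simp only []); rw [a.adj_support u v h, b.adj_support u v h]; ring
  finite_support := by
    apply (a.finite_support.union b.finite_support).subset
    intro p hp
    by_contra h
    simp only [Set.mem_union, Set.mem_setOf_eq, not_or, not_not] at h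
    exact hp (by simp [h.1, h.2])

end OneChain

open OneChain

/-
Given `x, y` and an edge `(u,v)`, pick a geodesic `p` from `x` to `y` and the vertices `a`, `b`
on it at distance `m > δ₁` before and after the index `d(x,u)`. A geodesic from `a` to `x`
stays closer to `x` than `u` by `m`, so by quasigeodesicity `q(a,x)` vanishes on `(u,v)`;
likewise `q(b,y)`. The two defect triangles `(x,y,a)` and `(a,b,y)` then bound `q(x,y)(u,v)`
by `q(a,b)(u,v) + 2D`, and `‖q(a,b)‖₁ ≤ C·d(a,b) ≤ 2Cm ≤ 2C(δ₁ + 1)`.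
-/

namespace SimpleGraph.Walk

variable {V : Type*} {G : SimpleGraph V} {x y : V}

lemma dist_getVert_le_sub (p : G.Walk x y) {i j : ℕ} (hij : i ≤ j) :
    G.dist (p.getVert i) (p.getVert j) ≤ j - i := by
  obtain ⟨k, rfl⟩ := Nat.exists_eq_add_of_le hij
  calc G.dist (p.getVert i) (p.getVert (i + k))
      = G.dist (p.getVert i) ((p.drop i).getVert k) := by rw [drop_getVert]
    _ ≤ ((p.drop i).take k).length := dist_le _
    _ ≤ i + k - i := by rw [take_length]; omega

lemma dist_getVert_le (p : G.Walk x y) (i : ℕ) : G.dist x (p.getVert i) ≤ i := by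
  simpa using p.dist_getVert_le_sub (Nat.zero_le i)

lemma dist_getVert_le_length_sub (p : G.Walk x y) (j : ℕ) :
    G.dist (p.getVert j) y ≤ p.length - j :=
  (dist_le (p.drop j)).trans_eq (drop_length p j)

end SimpleGraph.Walk

namespace OneChain

variable {V : Type*} {X : SimpleGraph V}

@[simp]
lemma add_val (a b : OneChain X) (u v : V) : (a.add b).val u v = a.val u v + b.val u v := rfl

lemma val_self (a : OneChain X) (u : V) : a.val u u = 0 := by
  linarith [a.antisymm u u]

lemma abs_val_le_l1 (a : OneChain X) (u v : V) : |a.val u v| ≤ a.l1 := by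
  rcases eq_or_ne u v with rfl | huv
  · rw [val_self, abs_zero, l1]
    exact div_nonneg (finsum_nonneg fun _ => abs_nonneg _) zero_le_two
  have hfin : (Function.support fun p : V × V => |a.val p.1 p.2|).Finite := by
    simpa only [Function.support, ne_eq, abs_eq_zero] using a.finite_support
  set s := hfin.toFinset ∪ {(u, v), (v, u)}
  have hpair := Finset.add_le_sum (f := fun p : V × V => |a.val p.1 p.2|)
    (fun _ _ => abs_nonneg _) (s := s) (i := (u, v)) (j := (v, u)) (by simp [s]) (by simp [s])
    (by simp [huv])
  simp only [a.antisymm v u, abs_neg] at hpair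
  rw [l1, finsum_eq_sum_of_support_subset _ (s := s)
    fun p hp => Finset.mem_union_left _ (hfin.mem_toFinset.mpr hp)]
  linarith

lemma val_eq_zero_of_l1_nonpos (a : OneChain X) (h : a.l1 ≤ 0) (u v : V) : a.val u v = 0 :=
  abs_nonpos_iff.mp ((a.abs_val_le_l1 u v).trans h)

end OneChain

section Bicombing

variable {V : Type*} {X : SimpleGraph V} (q : V → V → OneChain X)

def IsQuasigeodesicWith (δ : ℝ) : Prop :=
  ∀ (x y : V) (p : X.Walk x y), p.length = X.dist x y →
    ∀ u v : V, (q x y).val u v ≠ 0 →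
      ∃ w ∈ p.support, (X.dist u w : ℝ) ≤ δ ∧ (X.dist v w : ℝ) ≤ δ

variable {q}

lemma abs_val_le_mul_dist {C : ℝ} (hl1 : ∀ x y : V, ((q x y).l1 : ℝ) ≤ C * X.dist x y)
    (x y u v : V) : |((q x y).val u v : ℝ)| ≤ C * X.dist x y :=
  le_trans (by exact_mod_cast (q x y).abs_val_le_l1 u v) (hl1 x y)

lemma val_diag_eq_zero {C : ℝ} (hl1 : ∀ x y : V, ((q x y).l1 : ℝ) ≤ C * X.dist x y)
    (x u v : V) : (q x x).val u v = 0 := by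
  simpa using abs_val_le_mul_dist hl1 x x u v

lemma abs_val_le_of_defect {D : ℝ}
    (hdefect : ∀ x y z : V, ((((q x y).add (q y z)).add (q z x)).l1 : ℝ) ≤ D)
    {x y a b u v : V} (hax : (q a x).val u v = 0) (hby : (q b y).val u v = 0) :
    |((q x y).val u v : ℝ)| ≤ |((q a b).val u v : ℝ)| + 2 * D := by
  have htri : ∀ x y z : V,
      |((q x y).val u v : ℝ) + (q y z).val u v + (q z x).val u v| ≤ D := fun x y z => by
    have h := (((q x y).add (q y z)).add (q z x)).abs_val_le_l1 u v
    simp only [add_val] at h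
    exact le_trans (by exact_mod_cast h) (hdefect x y z)
  have hxya := abs_le.mp (htri x y a)
  have haby := abs_le.mp (htri a b y)
  rw [hax] at hxya
  rw [hby] at haby
  push_cast at hxya haby
  exact abs_le.mpr ⟨by linarith [neg_abs_le ((q a b).val u v : ℝ)],
    by linarith [le_abs_self ((q a b).val u v : ℝ)]⟩

namespace IsQuasigeodesicWith

variable {δ : ℝ}

lemma val_eq_zero_of_dist_add_le (hq : IsQuasigeodesicWith q δ) (hconn : X.Connected)
    {a x u : V} {m : ℕ} (hm : δ < m) (h : X.dist a x + m ≤ X.dist u x) (v : V) :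
    (q a x).val u v = 0 := by
  by_contra hne
  obtain ⟨γ, hγ⟩ := hconn.exists_walk_length_eq_dist a x
  obtain ⟨w, hw, hwu, -⟩ := hq a x γ hγ u v hne
  have hwx : X.dist w x ≤ X.dist a x :=
    hγ ▸ (SimpleGraph.dist_le _).trans (γ.length_dropUntil_le_length hw)
  have htri : X.dist u x ≤ X.dist u w + X.dist w x := hconn.dist_triangle
  have : (m : ℝ) ≤ X.dist u w := by exact_mod_cast (show m ≤ X.dist u w by omega)
  linarith

lemma val_getVert_sub_eq_zero (hq : IsQuasigeodesicWith q δ) (hconn : X.Connected)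
    {x y u v : V} (hx : (q x x).val u v = 0) (p : X.Walk x y)
    {m : ℕ} (hm : δ < m) : (q (p.getVert (X.dist x u - m)) x).val u v = 0 := by
  rcases lt_or_ge (X.dist x u) m with hum | hum
  · rwa [Nat.sub_eq_zero_of_le hum.le, p.getVert_zero]
  · refine hq.val_eq_zero_of_dist_add_le hconn hm ?_ v
    have := p.dist_getVert_le (X.dist x u - m)
    rw [X.dist_comm, X.dist_comm (u := u)]
    omega

lemma val_getVert_add_eq_zero (hq : IsQuasigeodesicWith q δ) (hconn : X.Connected)
    {x y u v : V} (hy : (q y y).val u v = 0) (p : X.Walk x y)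
    (hp : p.length = X.dist x y) {m : ℕ} (hm : δ < m) :
    (q (p.getVert (X.dist x u + m)) y).val u v = 0 := by
  rcases le_or_gt p.length (X.dist x u + m) with hL | hL
  · rwa [p.getVert_of_length_le hL]
  · refine hq.val_eq_zero_of_dist_add_le hconn hm ?_ v
    have := p.dist_getVert_le_length_sub (X.dist x u + m)
    have htri : X.dist x y ≤ X.dist x u + X.dist u y := hconn.dist_triangle
    omega

end IsQuasigeodesicWith

end Bicombing

theorem linfty_bound_of_quasigeodesic_general {V : Type*} (X : SimpleGraph V) (hconn : X.Connected)
    (q : V → V → OneChain X)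
    (δ₁ : ℝ) (hδ₁ : 0 ≤ δ₁)
    (hgeo : ∀ (x y : V) (p : X.Walk x y), p.length = X.dist x y →
      ∀ u v : V, (q x y).val u v ≠ 0 →
        ∃ w ∈ p.support, (X.dist u w : ℝ) ≤ δ₁ ∧ (X.dist v w : ℝ) ≤ δ₁)
    (C : ℝ) (hC : 0 ≤ C)
    (hl1 : ∀ x y : V, (((q x y).l1 : ℝ)) ≤ C * (X.dist x y : ℝ))
    (D : ℝ)
    (hdefect : ∀ x y z : V, (((((q x y).add (q y z)).add (q z x)).l1 : ℝ)) ≤ D) :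
    ∀ x y u v : V, ((|(q x y).val u v| : ℝ)) ≤ 2 * C * (δ₁ + 1) + 2 * D := by
  have hq : IsQuasigeodesicWith q δ₁ := hgeo
  intro x y u v
  obtain ⟨p, hp⟩ := hconn.exists_walk_length_eq_dist x y
  obtain ⟨m, hm, hm'⟩ : ∃ m : ℕ, δ₁ < m ∧ (m : ℝ) ≤ δ₁ + 1 :=
    ⟨⌊δ₁⌋₊ + 1, by push_cast; exact Nat.lt_floor_add_one δ₁,
      by push_cast; linarith [Nat.floor_le hδ₁]⟩
  set a := p.getVert (X.dist x u - m)
  set b := p.getVert (X.dist x u + m)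
  have hab : (X.dist a b : ℝ) ≤ 2 * m := by
    exact_mod_cast (p.dist_getVert_le_sub (by omega)).trans (by omega)
  calc |((q x y).val u v : ℝ)|
      ≤ |((q a b).val u v : ℝ)| + 2 * D :=
        abs_val_le_of_defect hdefect
          (hq.val_getVert_sub_eq_zero hconn (val_diag_eq_zero hl1 x u v) p hm)
          (hq.val_getVert_add_eq_zero hconn (val_diag_eq_zero hl1 y u v) p hp hm)
    _ ≤ C * (2 * m) + 2 * D := by
        gcongr
        exact (abs_val_le_mul_dist hl1 a b u v).trans (by gcongr)
    _ ≤ 2 * C * (δ₁ + 1) + 2 * D := by nlinarith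

/-- If a bicombing `q` is quasigeodesic with constant `δ₁`, has
`‖q(x,y)‖₁ ≤ C·d(x,y)` and defect at most `D`, then
`‖q(x,y)‖_∞ ≤ 2C(δ₁ + 1) + 2D`. -/
theorem linfty_bound_of_quasigeodesic {V : Type*} (X : SimpleGraph V) (hconn : X.Connected)
    (q : V → V → OneChain X)
    (hbdry : ∀ x y v, (q x y).boundary v =
      (if v = y then (1 : ℚ) else 0) - (if v = x then (1 : ℚ) else 0))
    (δ₁ : ℝ) (hδ₁ : 0 ≤ δ₁)
    (hgeo : ∀ (x y : V) (p : X.Walk x y), p.length = X.dist x y →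
      ∀ u v : V, (q x y).val u v ≠ 0 →
        ∃ w ∈ p.support, (X.dist u w : ℝ) ≤ δ₁ ∧ (X.dist v w : ℝ) ≤ δ₁)
    (C : ℝ) (hC : 0 ≤ C)
    (hl1 : ∀ x y : V, (((q x y).l1 : ℝ)) ≤ C * (X.dist x y : ℝ))
    (D : ℝ) (hD : 0 ≤ D)
    (hdefect : ∀ x y z : V, (((((q x y).add (q y z)).add (q z x)).l1 : ℝ)) ≤ D) :
    ∀ x y u v : V, ((|(q x y).val u v| : ℝ)) ≤ 2 * C * (δ₁ + 1) + 2 * D :=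
  linfty_bound_of_quasigeodesic_general X hconn q δ₁ hδ₁ hgeo C hC hl1 D hdefect
end

section
/- Let X be a connected simple graph with vertex set V and graph distance d, and let q assign to every ordered pair (x,y) of vertices a rational 1-chain q(x,y) on X such that ∂q(x,y) = 𝟙_y − 𝟙_x for all x,y, and such that there is a constant δ₁ ≥ 0 for which, for every geodesic γ from x to y, every unoriented edge {u,v} with q(x,y)(u,v) ≠ 0 lies within distance δ₁ of some vertex of γ. Set ρ = 2δ₁ + 1, and suppose λ ≥ 1 is such that for every vertex w of X, the number of unoriented edges lying within distance ρ of w is at most λ. Then for all x ≠ y in V and every vertex z with d(x,z) + d(z,y) = d(x,y), there exists an unoriented edge {u,v} with d(u,z) ≤ ρ and d(v,z) ≤ ρ such that |q(x,y)(u,v)| ≥ 1/λ. -/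
/-!
Cut `X` along the ball `S` of radius `k = min (d(x,z), d(x,y) - 1)` around `x`, so that `x ∈ S`
and `y ∉ S`. Since `∂q(x,y) = 𝟙_y − 𝟙_x`, the total flux of `q(x,y)` out of `S` is `1`. An edge
leaving `S` joins the spheres of radii `k` and `k + 1`; if its coefficient is nonzero it is
`δ₁`-close to a geodesic from `x` to `y` through `z`, and then it lies within `2δ₁ + 1` of `z`.
So the flux `1` is carried by at most `λ` edges, one of which has coefficient at least `1/λ`.
-/

open scoped Classical

open OneChain

open SimpleGraph Finset

lemma Finset.exists_one_div_le_abs_of_sum_eq_one {ι : Type*} {s : Finset ι} {f : ι → ℝ} {c : ℝ}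
    (hf : ∑ i ∈ s, f i = 1) (hs : (#s : ℝ) ≤ c) : ∃ i ∈ s, 1 / c ≤ |f i| := by
  have hne : s.Nonempty := nonempty_of_sum_ne_zero (by rw [hf]; exact one_ne_zero)
  have hc : 0 < c := lt_of_lt_of_le (by exact_mod_cast hne.card_pos) hs
  refine exists_le_of_sum_le hne ?_
  calc ∑ _i ∈ s, 1 / c = #s / c := by rw [sum_const, nsmul_eq_mul, mul_one_div]
    _ ≤ 1 := (div_le_one hc).2 hs
    _ = ∑ i ∈ s, f i := hf.symm
    _ ≤ ∑ i ∈ s, |f i| := sum_le_sum fun i _ => le_abs_self (f i)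

lemma Sym2.injOn_mk_of_mem_of_notMem {α : Type*} (S : Set α) :
    Set.InjOn (fun p : α × α => s(p.1, p.2)) {p | p.1 ∈ S ∧ p.2 ∉ S} := by
  rintro ⟨u, v⟩ ⟨hu, -⟩ ⟨u', v'⟩ ⟨-, hv'⟩ h
  rcases Sym2.eq_iff.1 h with ⟨rfl, rfl⟩ | ⟨rfl, -⟩
  · rfl
  · exact absurd hu hv'

namespace SimpleGraph

variable {V : Type*} {X : SimpleGraph V}

def edgeBall (X : SimpleGraph V) (z : V) (r : ℝ) : Set (Sym2 V) :=
  {e | e ∈ X.edgeSet ∧ ∀ v ∈ e, (X.dist v z : ℝ) ≤ r}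

namespace Connected

lemma dist_add_dist_of_mem_support (hconn : X.Connected) {a b w : V} {p : X.Walk a b}
    (hp : p.length = X.dist a b) (hw : w ∈ p.support) :
    X.dist a w + X.dist w b = X.dist a b := by
  have h₁ := dist_le (p.takeUntil w hw)
  have h₂ := dist_le (p.dropUntil w hw)
  have hlen : (p.takeUntil w hw).length + (p.dropUntil w hw).length = p.length := by
    rw [← Walk.length_append, p.take_spec hw]
  have := hconn.dist_triangle (u := a) (v := w) (w := b)
  omega

lemma dist_le_of_mem_support_append (hconn : X.Connected) {x y z u w : V}
    {p₁ : X.Walk x z} {p₂ : X.Walk z y} (hp₁ : p₁.length = X.dist x z)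
    (hp₂ : p₂.length = X.dist z y) (hz : X.dist x z + X.dist z y = X.dist x y)
    (hw : w ∈ (p₁.append p₂).support) (hu : X.dist x u ≤ X.dist x z)
    (hu' : X.dist x z ≤ X.dist x u + 1) :
    X.dist w z ≤ X.dist u w + 1 := by
  have hxw := hconn.dist_triangle (u := x) (v := u) (w := w)
  have hwu : X.dist w u = X.dist u w := dist_comm
  rcases Walk.mem_support_append_iff _ _ |>.1 hw with hw | hw
  · have := hconn.dist_add_dist_of_mem_support hp₁ hw
    have := hconn.dist_triangle (u := x) (v := w) (w := u)
    omega
  · have := hconn.dist_add_dist_of_mem_support hp₂ hw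
    have := hconn.dist_triangle (u := x) (v := w) (w := y)
    have hzw : X.dist z w = X.dist w z := dist_comm
    omega

end Connected

end SimpleGraph

namespace OneChain

variable {V : Type*} {X : SimpleGraph V} (a : OneChain X)

lemma adj_of_val_ne_zero {u v : V} (h : a.val u v ≠ 0) : X.Adj u v :=
  of_not_not (mt (a.adj_support u v) h)

noncomputable def support : Finset (V × V) := a.finite_support.toFinset

variable {a} in
lemma mem_support {p : V × V} : p ∈ a.support ↔ a.val p.1 p.2 ≠ 0 :=
  Set.Finite.mem_toFinset _

noncomputable def vertexSupport : Finset V := a.support.image Prod.fst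

variable {a} in
lemma fst_mem_vertexSupport {u v : V} (h : a.val u v ≠ 0) : u ∈ a.vertexSupport :=
  mem_image_of_mem Prod.fst (mem_support.2 h : (u, v) ∈ a.support)

variable {a} in
lemma snd_mem_vertexSupport {u v : V} (h : a.val u v ≠ 0) : v ∈ a.vertexSupport :=
  fst_mem_vertexSupport (by rwa [a.antisymm, neg_ne_zero])

lemma boundary_eq_sum {U : Finset V} (hU : a.vertexSupport ⊆ U) (v : V) :
    a.boundary v = ∑ u ∈ U, a.val u v :=
  finsum_eq_sum_of_support_subset _ fun _ hu => mem_coe.2 (hU (fst_mem_vertexSupport hu))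

lemma sum_sum_val_eq_zero (s : Finset V) : ∑ u ∈ s, ∑ v ∈ s, a.val u v = 0 := by
  refine self_eq_neg.1 ?_
  calc ∑ u ∈ s, ∑ v ∈ s, a.val u v = ∑ u ∈ s, ∑ v ∈ s, -a.val v u :=
        sum_congr rfl fun u _ => sum_congr rfl fun v _ => a.antisymm u v
    _ = -∑ v ∈ s, ∑ u ∈ s, a.val v u := by rw [sum_comm]; simp only [sum_neg_distrib]

noncomputable def crossing (S : Set V) : Finset (V × V) :=
  a.support.filter fun p => p.1 ∈ S ∧ p.2 ∉ S

variable {a} in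
lemma mem_crossing {S : Set V} {p : V × V} :
    p ∈ a.crossing S ↔ a.val p.1 p.2 ≠ 0 ∧ p.1 ∈ S ∧ p.2 ∉ S := by
  rw [crossing, mem_filter, mem_support]

theorem sum_crossing_eq_sum_boundary (S : Set V) {U : Finset V} (hU : a.vertexSupport ⊆ U) :
    ∑ p ∈ a.crossing S, a.val p.1 p.2 = ∑ v ∈ U with v ∉ S, a.boundary v := by
  have hsub : a.crossing S ⊆ (U.filter (· ∈ S)) ×ˢ (U.filter (· ∉ S)) := by
    intro p hp
    obtain ⟨hne, hp₁, hp₂⟩ := mem_crossing.1 hp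
    simp only [mem_product, mem_filter]
    exact ⟨⟨hU (fst_mem_vertexSupport hne), hp₁⟩, hU (snd_mem_vertexSupport hne), hp₂⟩
  have hzero : ∀ p ∈ (U.filter (· ∈ S)) ×ˢ (U.filter (· ∉ S)), p ∉ a.crossing S →
      a.val p.1 p.2 = 0 := by
    intro p hp hpC
    simp only [mem_product, mem_filter] at hp
    by_contra hne
    exact hpC (mem_crossing.2 ⟨hne, hp.1.2, hp.2.2⟩)
  calc ∑ p ∈ a.crossing S, a.val p.1 p.2
      = ∑ u ∈ U with u ∈ S, ∑ v ∈ U with v ∉ S, a.val u v := by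
        rw [sum_subset hsub hzero, sum_product]
    _ = ∑ v ∈ U with v ∉ S, (∑ u ∈ U with u ∈ S, a.val u v + ∑ u ∈ U with u ∉ S, a.val u v) := by
        rw [sum_add_distrib, sum_comm (s := U.filter (· ∉ S)) (t := U.filter (· ∉ S)),
          a.sum_sum_val_eq_zero, add_zero, sum_comm]
    _ = ∑ v ∈ U with v ∉ S, a.boundary v :=
        sum_congr rfl fun v _ => by rw [sum_filter_add_sum_filter_not, a.boundary_eq_sum hU]

theorem sum_crossing_eq_one {S : Set V} {x y : V}
    (hbdry : ∀ v, a.boundary v = (if v = y then (1 : ℚ) else 0) - (if v = x then (1 : ℚ) else 0))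
    (hx : x ∈ S) (hy : y ∉ S) : ∑ p ∈ a.crossing S, a.val p.1 p.2 = 1 := by
  rw [a.sum_crossing_eq_sum_boundary S (subset_union_left (s₂ := {y}))]
  simp [hbdry, sum_sub_distrib, hx, hy]

lemma mk_mem_edgeBall_of_mem_crossing_ball (hconn : X.Connected) {x y z : V} {δ : ℝ}
    (hgeo : ∀ p : X.Walk x y, p.length = X.dist x y →
      ∀ u v : V, a.val u v ≠ 0 → ∃ w ∈ p.support, (X.dist u w : ℝ) ≤ δ ∧ (X.dist v w : ℝ) ≤ δ)
    (hz : X.dist x z + X.dist z y = X.dist x y) {k : ℕ} (hk : k ≤ X.dist x z)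
    (hk' : X.dist x z ≤ k + 1) {p : V × V} (hp : p ∈ a.crossing {v | X.dist x v ≤ k}) :
    s(p.1, p.2) ∈ X.edgeBall z (2 * δ + 1) := by
  obtain ⟨u, v⟩ := p
  obtain ⟨hne, hu, hv⟩ := mem_crossing.1 hp
  have hadj := a.adj_of_val_ne_zero hne
  have hxu : X.dist x u = k := by
    have hu : X.dist x u ≤ k := hu
    have hv : ¬X.dist x v ≤ k := hv
    have := hconn.dist_triangle (u := x) (v := u) (w := v)
    have := hconn.dist_triangle (u := x) (v := v) (w := u)
    have h1 : X.dist u v = 1 := dist_eq_one_iff_adj.2 hadj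
    have h2 : X.dist v u = 1 := dist_eq_one_iff_adj.2 hadj.symm
    omega
  obtain ⟨p₁, hp₁⟩ := hconn.exists_walk_length_eq_dist x z
  obtain ⟨p₂, hp₂⟩ := hconn.exists_walk_length_eq_dist z y
  obtain ⟨w, hw, hwu, hwv⟩ :=
    hgeo (p₁.append p₂) (by rw [Walk.length_append, hp₁, hp₂, hz]) u v hne
  have hwz : (X.dist w z : ℝ) ≤ X.dist u w + 1 := by
    exact_mod_cast hconn.dist_le_of_mem_support_append hp₁ hp₂ hz hw (by omega) (by omega)
  have huz : (X.dist u z : ℝ) ≤ X.dist u w + X.dist w z := by exact_mod_cast hconn.dist_triangle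
  have hvz : (X.dist v z : ℝ) ≤ X.dist v w + X.dist w z := by exact_mod_cast hconn.dist_triangle
  refine ⟨hadj, fun t ht => ?_⟩
  rcases Sym2.mem_iff.1 ht with rfl | rfl <;> linarith

end OneChain

theorem exists_edge_with_large_coefficient_general {V : Type*} (X : SimpleGraph V) (hconn : X.Connected)
    (q : V → V → OneChain X)
    (hbdry : ∀ x y v, (q x y).boundary v =
      (if v = y then (1 : ℚ) else 0) - (if v = x then (1 : ℚ) else 0))
    (δ₁ : ℝ)
    (hgeo : ∀ (x y : V) (p : X.Walk x y), p.length = X.dist x y →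
      ∀ u v : V, (q x y).val u v ≠ 0 →
        ∃ w ∈ p.support, (X.dist u w : ℝ) ≤ δ₁ ∧ (X.dist v w : ℝ) ≤ δ₁)
    (lam : ℝ)
    (hcount : ∀ w : V,
      {e : Sym2 V | e ∈ X.edgeSet ∧ ∀ v ∈ e, (X.dist v w : ℝ) ≤ 2 * δ₁ + 1}.Finite ∧
      (({e : Sym2 V | e ∈ X.edgeSet ∧ ∀ v ∈ e, (X.dist v w : ℝ) ≤ 2 * δ₁ + 1}.ncard : ℝ)
        ≤ lam))
    (x y z : V) (hxy : x ≠ y)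
    (hz : X.dist x z + X.dist z y = X.dist x y) :
    ∃ u v : V, X.Adj u v ∧ (X.dist u z : ℝ) ≤ 2 * δ₁ + 1 ∧ (X.dist v z : ℝ) ≤ 2 * δ₁ + 1 ∧
      1 / lam ≤ ((|(q x y).val u v| : ℝ)) := by
  have hpos : 0 < X.dist x y := hconn.pos_dist_of_ne hxy
  set k := min (X.dist x z) (X.dist x y - 1) with hk
  set C := (q x y).crossing {v | X.dist x v ≤ k}
  obtain ⟨hEfin, hEcard⟩ := hcount z
  have hnear : ∀ p ∈ C, s(p.1, p.2) ∈ X.edgeBall z (2 * δ₁ + 1) :=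
    fun p hp => (q x y).mk_mem_edgeBall_of_mem_crossing_ball hconn (hgeo x y) hz
      (by omega) (by omega) hp
  have hflux : ∑ p ∈ C, ((q x y).val p.1 p.2 : ℝ) = 1 := by
    exact_mod_cast (q x y).sum_crossing_eq_one (hbdry x y) (by simp) (by simp; omega)
  have hcard : (#C : ℝ) ≤ lam := by
    refine le_trans ?_ hEcard
    rw [← Set.ncard_coe_finset]
    exact_mod_cast Set.ncard_le_ncard_of_injOn _ hnear
      ((Sym2.injOn_mk_of_mem_of_notMem _).mono fun p hp => (mem_crossing.1 hp).2) hEfin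
  obtain ⟨⟨u, v⟩, hp, hlarge⟩ := exists_one_div_le_abs_of_sum_eq_one hflux hcard
  obtain ⟨hadj, hball⟩ := hnear _ hp
  exact ⟨u, v, hadj, hball u (Sym2.mem_mk_left u v), hball v (Sym2.mem_mk_right u v),
    by exact_mod_cast hlarge⟩

/-- If `q` is a quasigeodesic bicombing with constant `δ₁`, every ball of radius
`ρ = 2δ₁ + 1` contains at most `λ` unoriented edges, and `z` lies on a geodesic
between `x ≠ y`, then some edge within distance `ρ` of `z` has coefficient at
least `1/λ` in `q(x,y)`. -/
theorem exists_edge_with_large_coefficient {V : Type*} (X : SimpleGraph V) (hconn : X.Connected)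
    (q : V → V → OneChain X)
    (hbdry : ∀ x y v, (q x y).boundary v =
      (if v = y then (1 : ℚ) else 0) - (if v = x then (1 : ℚ) else 0))
    (δ₁ : ℝ) (hδ₁ : 0 ≤ δ₁)
    (hgeo : ∀ (x y : V) (p : X.Walk x y), p.length = X.dist x y →
      ∀ u v : V, (q x y).val u v ≠ 0 →
        ∃ w ∈ p.support, (X.dist u w : ℝ) ≤ δ₁ ∧ (X.dist v w : ℝ) ≤ δ₁)
    (lam : ℝ) (hlam : 1 ≤ lam)
    (hcount : ∀ w : V,
      {e : Sym2 V | e ∈ X.edgeSet ∧ ∀ v ∈ e, (X.dist v w : ℝ) ≤ 2 * δ₁ + 1}.Finite ∧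
      (({e : Sym2 V | e ∈ X.edgeSet ∧ ∀ v ∈ e, (X.dist v w : ℝ) ≤ 2 * δ₁ + 1}.ncard : ℝ)
        ≤ lam))
    (x y z : V) (hxy : x ≠ y)
    (hz : X.dist x z + X.dist z y = X.dist x y) :
    ∃ u v : V, X.Adj u v ∧ (X.dist u z : ℝ) ≤ 2 * δ₁ + 1 ∧ (X.dist v z : ℝ) ≤ 2 * δ₁ + 1 ∧
      1 / lam ≤ ((|(q x y).val u v| : ℝ)) :=
  exists_edge_with_large_coefficient_general X hconn q hbdry δ₁ hgeo lam hcount x y z hxy hz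
end
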